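/- arXiv:2605.16930 — 2 statements merged into one kernel-verified Lean document; each statement's English description precedes it below -/
import Mathlib

section
/- For third-order tensors A ∈ ℝ^{m×n×p} and B ∈ ℝ^{n×s×p}, the block circulant matrix of their T-product equals the product of their block circulant matrices: bcirc(A * B) = bcirc(A) · bcirc(B). -/
open Matrix

/-!
The T-product is circular convolution of frontal slices, `tProd A B k = ∑ a, A (k - a) * B a`,
while the `(k, l)` block of `bcirc A * bcirc B` is `∑ c, A (k - c) * B (c - l)`. Substituting
`c = a + l` turns the latter into the former at index `k - l`, the `(k, l)` block of
`bcirc (tProd A B)`.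
-/

/-- The block circulant matrix of a third-order tensor, given by its frontal slices. -/
def bcirc {m n p : ℕ} (A : Fin p → Matrix (Fin m) (Fin n) ℝ) :
    Matrix (Fin p × Fin m) (Fin p × Fin n) ℝ :=
  fun ki lj => A (ki.1 - lj.1) ki.2 lj.2

/-- The unfold operator, stacking the frontal slices vertically. -/
def unfold {n s p : ℕ} (B : Fin p → Matrix (Fin n) (Fin s) ℝ) :
    Matrix (Fin p × Fin n) (Fin s) ℝ :=
  fun ki j => B ki.1 ki.2 j

/-- The T-product of third-order tensors: A * B = fold(bcirc(A) · unfold(B)). -/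
def tProd {m n s p : ℕ} (A : Fin p → Matrix (Fin m) (Fin n) ℝ)
    (B : Fin p → Matrix (Fin n) (Fin s) ℝ) : Fin p → Matrix (Fin m) (Fin s) ℝ :=
  fun k i j => (bcirc A * unfold B) (k, i) j

theorem Fintype.sum_sub_sub_eq_sum {G M : Type*} [AddCommGroup G] [Fintype G] [AddCommMonoid M]
    (f : G → G → M) (k l : G) :
    ∑ c, f (k - c) (c - l) = ∑ a, f (k - l - a) a :=
  (Fintype.sum_equiv (Equiv.addRight l) _ _ fun a => by
    rw [Equiv.coe_addRight, add_sub_cancel_right, sub_add_eq_sub_sub_swap]).symm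

theorem tProd_eq_sum {m n s p : ℕ} (A : Fin p → Matrix (Fin m) (Fin n) ℝ)
    (B : Fin p → Matrix (Fin n) (Fin s) ℝ) (k : Fin p) :
    tProd A B k = ∑ a, A (k - a) * B a := by
  ext i j
  simp only [tProd, bcirc, unfold, mul_apply, Fintype.sum_prod_type, Matrix.sum_apply]

theorem bcirc_mul_bcirc_apply {m n s p : ℕ} (A : Fin p → Matrix (Fin m) (Fin n) ℝ)
    (B : Fin p → Matrix (Fin n) (Fin s) ℝ) (k l : Fin p) (i : Fin m) (j : Fin s) :
    (bcirc A * bcirc B) (k, i) (l, j) = (∑ c, A (k - c) * B (c - l)) i j := by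
  simp only [bcirc, mul_apply, Fintype.sum_prod_type, Matrix.sum_apply]

/-- bcirc(A * B) = bcirc(A) · bcirc(B). -/
theorem bcirc_tprod {m n s p : ℕ} (A : Fin p → Matrix (Fin m) (Fin n) ℝ)
    (B : Fin p → Matrix (Fin n) (Fin s) ℝ) :
    bcirc (tProd A B) = bcirc A * bcirc B := by
  obtain rfl | hp := p.eq_zero_or_pos
  · exact Subsingleton.elim _ _
  have : NeZero p := ⟨hp.ne'⟩
  ext ⟨k, i⟩ ⟨l, j⟩
  rw [bcirc_mul_bcirc_apply, Fintype.sum_sub_sub_eq_sum (fun c d => A c * B d)]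
  simp only [bcirc, tProd_eq_sum]
end

section
/- The map X ↦ tr(X^{1/2}) on the set of n×n positive definite Hermitian matrices is strictly concave: for distinct positive definite X, Y and positive a, b with a + b = 1, tr((aX + bY)^{1/2}) > a·tr(X^{1/2}) + b·tr(Y^{1/2}). -/
open Matrix ComplexOrder

/-- The positive semidefinite square root of a positive semidefinite matrix
(the definition `Matrix.PosSemidef.sqrt` of the older Mathlib, removed since). -/
noncomputable def Matrix.PosSemidef.sqrt {n 𝕜 : Type*} [Fintype n] [RCLike 𝕜] [DecidableEq n]
    {A : Matrix n n 𝕜} (hA : A.PosSemidef) : Matrix n n 𝕜 :=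
  (hA.1.eigenvectorUnitary : Matrix n n 𝕜) * diagonal (((↑) : ℝ → 𝕜) ∘ (√·) ∘ hA.1.eigenvalues) *
  (star hA.1.eigenvectorUnitary : Matrix n n 𝕜)

lemma Matrix.PosSemidef.posSemidef_sqrt {n 𝕜 : Type*} [Fintype n] [RCLike 𝕜] [DecidableEq n]
    {A : Matrix n n 𝕜} (hA : A.PosSemidef) : hA.sqrt.PosSemidef := by
  unfold Matrix.PosSemidef.sqrt
  have hD : (diagonal (((↑) : ℝ → 𝕜) ∘ (√·) ∘ hA.1.eigenvalues)).PosSemidef :=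
    PosSemidef.diagonal fun i => by simp [RCLike.ofReal_nonneg, Real.sqrt_nonneg]
  have := hD.mul_mul_conjTranspose_same (hA.1.eigenvectorUnitary : Matrix n n 𝕜)
  simpa [star_eq_conjTranspose] using this

lemma Matrix.PosSemidef.sqrt_mul_self {n 𝕜 : Type*} [Fintype n] [RCLike 𝕜] [DecidableEq n]
    {A : Matrix n n 𝕜} (hA : A.PosSemidef) : hA.sqrt * hA.sqrt = A := by
  unfold Matrix.PosSemidef.sqrt
  set U : Matrix n n 𝕜 := (hA.1.eigenvectorUnitary : Matrix n n 𝕜) with hUdef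
  set D := diagonal (((↑) : ℝ → 𝕜) ∘ (√·) ∘ hA.1.eigenvalues) with hDdef
  have hU : star U * U = 1 := Unitary.coe_star_mul_self _
  have h1 : U * D * star U * (U * D * star U) = U * D * (star U * U) * D * star U := by
    simp only [Matrix.mul_assoc]
  have hDD : D * D = diagonal (RCLike.ofReal ∘ hA.1.eigenvalues) := by
    rw [hDdef, diagonal_mul_diagonal]
    congr 1
    funext i
    simp only [Function.comp_apply]
    rw [← RCLike.ofReal_mul, Real.mul_self_sqrt (hA.eigenvalues_nonneg i)]
  rw [h1, hU, Matrix.mul_one, Matrix.mul_assoc U D D, hDD]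
  conv_rhs => rw [hA.1.spectral_theorem]
  simp [hUdef]

namespace TraceSqrtAux

variable {n : ℕ}

lemma trace_re_eq (B : Matrix (Fin n) (Fin n) ℂ) :
    ((B * Bᴴ).trace).re = ∑ i, ∑ j, Complex.normSq (B i j) := by
  have : (B * Bᴴ).trace = ∑ i, ∑ j, (Complex.normSq (B i j) : ℂ) := by
    simp [Matrix.trace, Matrix.diag, Matrix.mul_apply, Matrix.conjTranspose_apply,
      Complex.mul_conj]
  rw [this]
  simp [Complex.re_sum]

lemma trace_re_nonneg (B : Matrix (Fin n) (Fin n) ℂ) : 0 ≤ ((B * Bᴴ).trace).re := by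
  rw [trace_re_eq]
  exact Finset.sum_nonneg fun i _ => Finset.sum_nonneg fun j _ => Complex.normSq_nonneg _

lemma trace_re_pos {B : Matrix (Fin n) (Fin n) ℂ} (hB : B ≠ 0) : 0 < ((B * Bᴴ).trace).re := by
  rw [trace_re_eq]
  obtain ⟨i, j, hij⟩ : ∃ i j, B i j ≠ 0 := by
    by_contra h
    push_neg at h
    exact hB (by ext i j; simp [h i j])
  refine Finset.sum_pos' (fun i _ => Finset.sum_nonneg fun j _ => Complex.normSq_nonneg _)
    ⟨i, Finset.mem_univ i, Finset.sum_pos' (fun j _ => Complex.normSq_nonneg _)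
      ⟨j, Finset.mem_univ j, Complex.normSq_pos.2 hij⟩⟩

lemma sqrt_posDef {M : Matrix (Fin n) (Fin n) ℂ} (hM : M.PosDef) :
    (hM.posSemidef.sqrt).PosDef := by
  have hS := hM.posSemidef.posSemidef_sqrt
  refine posDef_iff_dotProduct_mulVec.2
    ⟨hS.1, fun x hx => lt_of_le_of_ne (hS.dotProduct_mulVec_nonneg x) fun h => ?_⟩
  have h0 : hM.posSemidef.sqrt *ᵥ x = 0 := (hS.dotProduct_mulVec_zero_iff x).mp h.symm
  have hMx : M *ᵥ x = 0 := by
    rw [← hM.posSemidef.sqrt_mul_self, ← Matrix.mulVec_mulVec, h0, Matrix.mulVec_zero]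
  have := hM.dotProduct_mulVec_pos hx
  rw [hMx, dotProduct_zero] at this
  exact lt_irrefl 0 this

lemma smul_posDef {M : Matrix (Fin n) (Fin n) ℂ} (hM : M.PosDef) {a : ℝ} (ha : 0 < a) :
    ((a : ℂ) • M).PosDef := by
  refine posDef_iff_dotProduct_mulVec.2 ⟨?_, fun x hx => ?_⟩
  · have h1 : Mᴴ = M := hM.1
    simp [Matrix.IsHermitian, Matrix.conjTranspose_smul, h1, Complex.conj_ofReal]
  · rw [Matrix.smul_mulVec, dotProduct_smul, smul_eq_mul]
    exact mul_pos (by exact_mod_cast ha) (hM.dotProduct_mulVec_pos hx)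

lemma key_core {R S M T : Matrix (Fin n) (Fin n) ℂ}
    (hRh : Rᴴ = R) (hSh : Sᴴ = S) (hSu : IsUnit S.det)
    (hSS : S * S = T) (hRR : R * R = M) :
    ((S⁻¹ * R - S) * (S⁻¹ * R - S)ᴴ).trace
      = (M * T⁻¹).trace + T.trace - 2 * R.trace := by
  have hSinvh : (S⁻¹)ᴴ = S⁻¹ := by rw [Matrix.conjTranspose_nonsing_inv, hSh]
  have hBH : (S⁻¹ * R - S)ᴴ = R * S⁻¹ - S := by
    rw [Matrix.conjTranspose_sub, Matrix.conjTranspose_mul, hSinvh, hRh, hSh]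
  rw [hBH]
  have expand : (S⁻¹ * R - S) * (R * S⁻¹ - S)
      = S⁻¹ * R * (R * S⁻¹) - S⁻¹ * R * S - S * (R * S⁻¹) + S * S := by
    noncomm_ring
  rw [expand]
  have hTinv : T⁻¹ = S⁻¹ * S⁻¹ := by rw [← hSS, Matrix.mul_inv_rev]
  have t1 : (S⁻¹ * R * (R * S⁻¹)).trace = (M * T⁻¹).trace := by
    calc (S⁻¹ * R * (R * S⁻¹)).trace = (S⁻¹ * (R * R * S⁻¹)).trace := by
          congr 1; noncomm_ring
      _ = ((R * R * S⁻¹) * S⁻¹).trace := Matrix.trace_mul_comm _ _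
      _ = (M * T⁻¹).trace := by rw [hTinv, ← hRR]; congr 1; noncomm_ring
  have t2 : (S⁻¹ * R * S).trace = R.trace := by
    rw [Matrix.trace_mul_cycle, Matrix.mul_nonsing_inv _ hSu, Matrix.one_mul]
  have t3 : (S * (R * S⁻¹)).trace = R.trace := by
    rw [Matrix.trace_mul_comm, Matrix.mul_assoc, Matrix.nonsing_inv_mul _ hSu, Matrix.mul_one]
  rw [Matrix.trace_add, Matrix.trace_sub, Matrix.trace_sub, t1, t2, t3, hSS]
  ring

lemma key_ineq {M T : Matrix (Fin n) (Fin n) ℂ} (hM : M.PosDef) (hT : T.PosDef) :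
    2 * hM.posSemidef.sqrt.trace.re ≤ (M * T⁻¹).trace.re + T.trace.re ∧
    (T * T ≠ M → 2 * hM.posSemidef.sqrt.trace.re < (M * T⁻¹).trace.re + T.trace.re) := by
  set R := hM.posSemidef.sqrt with hRdef
  set S := hT.posSemidef.sqrt with hSdef
  have hRh : Rᴴ = R := hM.posSemidef.posSemidef_sqrt.1
  have hSh : Sᴴ = S := hT.posSemidef.posSemidef_sqrt.1
  have hSu : IsUnit S.det := (Matrix.isUnit_iff_isUnit_det S).mp (sqrt_posDef hT).isUnit
  have hSS : S * S = T := hT.posSemidef.sqrt_mul_self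
  have hRR : R * R = M := hM.posSemidef.sqrt_mul_self
  have hid := key_core hRh hSh hSu hSS hRR
  have hre := congrArg Complex.re hid
  simp only [Complex.add_re, Complex.sub_re, Complex.mul_re, Complex.re_ofNat,
    Complex.im_ofNat, zero_mul, sub_zero] at hre
  constructor
  · have := trace_re_nonneg (S⁻¹ * R - S)
    linarith
  · intro hne
    have hB : S⁻¹ * R - S ≠ 0 := by
      intro h0
      apply hne
      have h1 : S⁻¹ * R = S := by rwa [sub_eq_zero] at h0
      have h2 : S * (S⁻¹ * R) = S * S := by rw [h1]
      rw [← Matrix.mul_assoc, Matrix.mul_nonsing_inv _ hSu, Matrix.one_mul] at h2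
      rw [← hRR, h2, hSS]
    have := trace_re_pos hB
    linarith

end TraceSqrtAux

/-- The map X ↦ tr(X^{1/2}) is strictly concave on positive definite Hermitian
matrices: for distinct positive definite X, Y and a, b > 0 with a + b = 1,
tr((aX + bY)^{1/2}) > a·tr(X^{1/2}) + b·tr(Y^{1/2}). -/
theorem trace_sqrt_strictly_concave {n : ℕ}
    (X Y : Matrix (Fin n) (Fin n) ℂ) (hX : X.PosDef) (hY : Y.PosDef)
    (hne : X ≠ Y) (a b : ℝ) (ha : 0 < a) (hb : 0 < b) (hab : a + b = 1)
    (hXY : ((a : ℂ) • X + (b : ℂ) • Y).PosSemidef) :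
    a * hX.posSemidef.sqrt.trace.re + b * hY.posSemidef.sqrt.trace.re <
      hXY.sqrt.trace.re := by
  have hABpd : ((a : ℂ) • X + (b : ℂ) • Y).PosDef :=
    (TraceSqrtAux.smul_posDef hX ha).add (TraceSqrtAux.smul_posDef hY hb)
  have hTpd : (hXY.sqrt).PosDef := TraceSqrtAux.sqrt_posDef hABpd
  set T := hXY.sqrt with hTdef
  have hTu : IsUnit T.det := (Matrix.isUnit_iff_isUnit_det T).mp hTpd.isUnit
  have hT2 : T * T = (a : ℂ) • X + (b : ℂ) • Y := hXY.sqrt_mul_self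
  have k1 := TraceSqrtAux.key_ineq hX hTpd
  have k2 := TraceSqrtAux.key_ineq hY hTpd
  -- mixed trace identity
  have hmix : a * (X * T⁻¹).trace.re + b * (Y * T⁻¹).trace.re = T.trace.re := by
    have h2 : ((a : ℂ) • X + (b : ℂ) • Y) * T⁻¹ = T := by
      rw [← hT2]
      exact Matrix.mul_nonsing_inv_cancel_right _ _ hTu
    have h3 : (((a : ℂ) • X + (b : ℂ) • Y) * T⁻¹).trace
        = (a : ℂ) * (X * T⁻¹).trace + (b : ℂ) * (Y * T⁻¹).trace := by
      rw [Matrix.add_mul, Matrix.smul_mul, Matrix.smul_mul, Matrix.trace_add,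
        Matrix.trace_smul, Matrix.trace_smul, smul_eq_mul, smul_eq_mul]
    have h4 := congrArg Complex.re (h3.symm.trans (congrArg Matrix.trace h2))
    simpa [Complex.add_re, Complex.re_ofReal_mul] using h4
  have hsum : a * T.trace.re + b * T.trace.re = T.trace.re := by
    rw [← add_mul, hab, one_mul]
  have hcase : T * T ≠ X ∨ T * T ≠ Y := by
    by_contra h
    push_neg at h
    exact hne (h.1.symm.trans h.2)
  rcases hcase with h | h
  · have e1 := k1.2 h
    have e2 := k2.1
    have f1 : a * (2 * hX.posSemidef.sqrt.trace.re)
        < a * ((X * T⁻¹).trace.re + T.trace.re) := by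
      exact mul_lt_mul_of_pos_left e1 ha
    have f2 : b * (2 * hY.posSemidef.sqrt.trace.re)
        ≤ b * ((Y * T⁻¹).trace.re + T.trace.re) :=
      mul_le_mul_of_nonneg_left e2 hb.le
    rw [mul_add] at f1 f2
    nlinarith [f1, f2, hmix, hsum]
  · have e1 := k1.1
    have e2 := k2.2 h
    have f1 : a * (2 * hX.posSemidef.sqrt.trace.re)
        ≤ a * ((X * T⁻¹).trace.re + T.trace.re) :=
      mul_le_mul_of_nonneg_left e1 ha.le
    have f2 : b * (2 * hY.posSemidef.sqrt.trace.re)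
        < b * ((Y * T⁻¹).trace.re + T.trace.re) :=
      mul_lt_mul_of_pos_left e2 hb
    rw [mul_add] at f1 f2
    nlinarith [f1, f2, hmix, hsum]
end
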